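/- arXiv:1611.05542 — 4 statements merged into one kernel-verified Lean document; each statement's English description precedes it below -/
import Mathlib

section
/- (Theorem 1, equivalence of statements 2 and 3.) A pair (x*, Λ*) ∈ Ω × (ℝ^M_+)^N is a saddle point of the modified Lagrangian L̃ on Ω × (ℝ^M_+)^N if and only if Λ* = (λ*, …, λ*) has all N blocks equal to some common λ* ∈ ℝ^M_+ and (x*, λ*) is a saddle point of the original Lagrangian L on Ω × ℝ^M_+. -/
/-!
On consensus multipliers `λ = (μ, …, μ)` the penalty vanishes and `L̃(x, λ) = L(x, μ)`, so it
suffices to show that a saddle point of `L̃` has consensus multipliers. Fix a node `i₀`. Along a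
path in the connected graph, `‖λ_i - λ_{i₀}‖ ≤ ‖λ_i - λ_{i₀}‖₁ ≤ φ(λ)`, and by Cauchy–Schwarz
`∑ ‖g_i(x*_i)‖ ≤ √N K₀`; together
`L̃(x*, λ) ≤ L(x*, λ_{i₀}) - (K - √N K₀) φ(λ)`.
As `K > √N K₀` the penalty is exact: maximality of `Λ*` forces `φ(Λ*) = 0`, and conversely a
consensus saddle point of `L` dominates every `L̃(x*, λ)`.
-/

open scoped RealInnerProductSpace
open Finset

namespace SimpleGraph

variable {V : Type*} {G : SimpleGraph V} {d : V → V → ℝ}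

lemma Walk.le_sum_map_edges {D : Sym2 V → ℝ} (h0 : ∀ a, d a a = 0)
    (htri : ∀ a b c, d a c ≤ d a b + d b c) (hD : ∀ a b, G.Adj a b → d a b ≤ D s(a, b))
    {a b : V} (w : G.Walk a b) : d a b ≤ (w.edges.map D).sum := by
  induction w with
  | nil => simp [h0]
  | @cons u v w huv p ih =>
    rw [Walk.edges_cons, List.map_cons, List.sum_cons]
    exact (htri u v w).trans (add_le_add (hD u v huv) ih)

variable [Fintype V] [DecidableRel G.Adj]

lemma sum_darts_eq_sum_sum_neighborFinset (F : V → V → ℝ) :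
    ∑ d : G.Dart, F d.fst d.snd = ∑ i, ∑ j ∈ G.neighborFinset i, F i j := by
  have hdarts : ∑ d : G.Dart, F d.fst d.snd = ∑ p : V × V with G.Adj p.1 p.2, F p.1 p.2 :=
    sum_bij' (fun d _ => d.toProd) (fun p hp => ⟨p, (mem_filter.mp hp).2⟩)
      (fun d _ => mem_filter.mpr ⟨mem_univ _, d.adj⟩) (fun _ _ => mem_univ _)
      (fun _ _ => rfl) (fun _ _ => rfl) (fun _ _ => rfl)
  simp_rw [hdarts, sum_filter, Fintype.sum_prod_type, neighborFinset_eq_filter, sum_filter]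

lemma sum_darts_edge_eq_two_mul_sum_edgeFinset (H : Sym2 V → ℝ) :
    ∑ d : G.Dart, H d.edge = 2 * ∑ e ∈ G.edgeFinset, H e := by
  classical
  have himage : (univ : Finset G.Dart).image Dart.edge = G.edgeFinset := by
    ext e
    induction e using Sym2.ind with
    | _ v w =>
      simp only [mem_image, mem_univ, true_and]
      exact ⟨fun ⟨d, hd⟩ => hd ▸ mem_edgeFinset.2 d.edge_mem,
        fun h => ⟨⟨(v, w), mem_edgeFinset.1 h⟩, rfl⟩⟩
  rw [sum_comp, himage, mul_sum]
  refine sum_congr rfl fun e he => ?_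
  rw [G.dart_edge_fiber_card e (mem_edgeFinset.1 he), two_nsmul, two_mul]

lemma Connected.le_sum_edgeFinset (hG : G.Connected) {D : Sym2 V → ℝ} (h0 : ∀ a, d a a = 0)
    (htri : ∀ a b c, d a c ≤ d a b + d b c) (hD : ∀ a b, G.Adj a b → d a b ≤ D s(a, b))
    (hD_nonneg : ∀ e, 0 ≤ D e) (a b : V) : d a b ≤ ∑ e ∈ G.edgeFinset, D e := by
  classical
  obtain ⟨p, hp⟩ := (hG.preconnected a b).some.toPath
  have hsub : p.edges.toFinset ⊆ G.edgeFinset := fun e he =>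
    mem_edgeFinset.2 (p.edges_subset_edgeSet (List.mem_toFinset.1 he))
  calc d a b ≤ (p.edges.map D).sum := p.le_sum_map_edges h0 htri hD
    _ = ∑ e ∈ p.edges.toFinset, D e := (List.sum_toFinset D hp.edges_nodup).symm
    _ ≤ ∑ e ∈ G.edgeFinset, D e := sum_le_sum_of_subset_of_nonneg hsub fun e _ _ => hD_nonneg e

lemma Connected.le_half_sum_sum_neighborFinset (hG : G.Connected) (hsymm : ∀ a b, d a b = d b a)
    (h0 : ∀ a, d a a = 0) (htri : ∀ a b c, d a c ≤ d a b + d b c) (a b : V) :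
    d a b ≤ 1 / 2 * ∑ i, ∑ j ∈ G.neighborFinset i, d i j := by
  let D : Sym2 V → ℝ := Sym2.lift ⟨d, hsymm⟩
  have hD_nonneg : ∀ e, 0 ≤ D e := Sym2.ind fun u v => by
    have := htri u v u
    rw [h0, hsymm v u] at this
    simp only [D, Sym2.lift_mk]
    linarith
  have hbound := hG.le_sum_edgeFinset h0 htri (fun u v _ => (Sym2.lift_mk ⟨d, hsymm⟩ u v).ge)
    hD_nonneg a b
  have hdarts := (sum_darts_edge_eq_two_mul_sum_edgeFinset (G := G) D).symm.trans
    (sum_darts_eq_sum_sum_neighborFinset d)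
  linarith

end SimpleGraph

theorem PiLp.norm_le_sum_norm {p : ENNReal} [Fact (1 ≤ p)] {ι : Type*} [Fintype ι]
    {β : ι → Type*} [∀ i, SeminormedAddCommGroup (β i)] (x : PiLp p β) :
    ‖x‖ ≤ ∑ i, ‖x i‖ := by
  classical
  calc ‖x‖ = ‖∑ i, PiLp.single p i (x i)‖ := by congr 1; ext j; simp
    _ ≤ ∑ i, ‖PiLp.single p i (x i)‖ := norm_sum_le _ _
    _ = ∑ i, ‖x i‖ := by simp only [PiLp.norm_single]

section ConsensusPenalty

variable {V ι : Type*} [Fintype V] [Fintype ι] (G : SimpleGraph V) [DecidableRel G.Adj]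

noncomputable def consensusPenalty (lam : V → EuclideanSpace ℝ ι) : ℝ :=
  1 / 2 * ∑ i, ∑ j ∈ G.neighborFinset i, ∑ m, |lam i m - lam j m|

lemma consensusPenalty_nonneg (lam : V → EuclideanSpace ℝ ι) : 0 ≤ consensusPenalty G lam := by
  unfold consensusPenalty
  positivity

@[simp]
lemma consensusPenalty_const (μ : EuclideanSpace ℝ ι) : consensusPenalty G (fun _ => μ) = 0 := by
  simp [consensusPenalty]

variable {G}

lemma SimpleGraph.Connected.norm_sub_le_consensusPenalty (hG : G.Connected)
    (lam : V → EuclideanSpace ℝ ι) (a b : V) : ‖lam a - lam b‖ ≤ consensusPenalty G lam := by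
  calc ‖lam a - lam b‖ ≤ ∑ m, |lam a m - lam b m| := by
        simpa only [PiLp.sub_apply, Real.norm_eq_abs] using PiLp.norm_le_sum_norm (lam a - lam b)
    _ ≤ consensusPenalty G lam :=
      hG.le_half_sum_sum_neighborFinset (d := fun i j => ∑ m, |lam i m - lam j m|)
        (fun i j => sum_congr rfl fun m _ => abs_sub_comm _ _) (fun i => by simp)
        (fun i j k => (sum_le_sum fun m _ => abs_sub_le _ _ _).trans_eq sum_add_distrib) a b

lemma SimpleGraph.Connected.eq_of_consensusPenalty_eq_zero (hG : G.Connected)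
    {lam : V → EuclideanSpace ℝ ι} (h : consensusPenalty G lam = 0) (a b : V) : lam a = lam b :=
  sub_eq_zero.1 (norm_le_zero_iff.1 (h ▸ hG.norm_sub_le_consensusPenalty lam a b))

end ConsensusPenalty

lemma sum_le_sqrt_card_mul_sqrt_sum_sq {ι : Type*} (s : Finset ι) (f : ι → ℝ) :
    ∑ i ∈ s, f i ≤ √(#s : ℝ) * √(∑ i ∈ s, f i ^ 2) := by
  simpa using Real.sum_mul_le_sqrt_mul_sqrt s (fun _ => 1) f

lemma sum_inner_le_inner_sum_add {V E : Type*} [Fintype V] [NormedAddCommGroup E]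
    [InnerProductSpace ℝ E] (lam c : V → E) (i₀ : V) {r : ℝ} (hr : ∀ i, ‖lam i - lam i₀‖ ≤ r) :
    ∑ i, ⟪lam i, c i⟫ ≤ ⟪lam i₀, ∑ i, c i⟫ + r * ∑ i, ‖c i‖ := by
  have hsplit : ∑ i, ⟪lam i, c i⟫ = ⟪lam i₀, ∑ i, c i⟫ + ∑ i, ⟪lam i - lam i₀, c i⟫ := by
    simp only [inner_sum, inner_sub_left, sum_sub_distrib]
    ring
  rw [hsplit, mul_sum]
  gcongr with i
  calc ⟪lam i - lam i₀, c i⟫ ≤ ‖lam i - lam i₀‖ * ‖c i‖ := real_inner_le_norm _ _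
    _ ≤ r * ‖c i‖ := mul_le_mul_of_nonneg_right (hr i) (norm_nonneg _)

lemma isSaddlePointOn_iff_forall_le_and_le {α β γ : Type*} [Preorder γ] {X : Set α} {Y : Set β}
    {f : α → β → γ} {a : α} {b : β} (ha : a ∈ X) (hb : b ∈ Y) :
    IsSaddlePointOn X Y f a b ↔ ∀ x ∈ X, ∀ y ∈ Y, f a y ≤ f a b ∧ f a b ≤ f x b :=
  ⟨fun h x hx y hy => ⟨h a ha y hy, h x hx b hb⟩,
    fun h x hx y hy => (h x hx y hy).1.trans (h x hx y hy).2⟩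

theorem isSaddlePointOn_pi_iff_of_exact_penalty {α V E : Type*} {X : Set α} {Y : Set E}
    {Lt : α → (V → E) → ℝ} {L : α → E → ℝ} {φ : (V → E) → ℝ} {a : α} {Λ : V → E} (i₀ : V)
    {δ : ℝ} (hδ : 0 < δ) (ha : a ∈ X) (hΛ : ∀ i, Λ i ∈ Y)
    (hconst : ∀ x μ, Lt x (fun _ => μ) = L x μ) (hφ_nonneg : ∀ lam, 0 ≤ φ lam)
    (hφ_eq_zero : ∀ lam, φ lam = 0 → ∀ i, lam i = lam i₀)
    (hpen : ∀ lam, Lt a lam + δ * φ lam ≤ L a (lam i₀)) :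
    IsSaddlePointOn X {lam | ∀ i, lam i ∈ Y} Lt a Λ ↔
      ∃ μ ∈ Y, (∀ i, Λ i = μ) ∧ IsSaddlePointOn X Y L a μ := by
  constructor
  · intro h
    have hφΛ : φ Λ = 0 := by
      have hle : L a (Λ i₀) ≤ Lt a Λ := hconst a (Λ i₀) ▸ h a ha _ fun _ => hΛ i₀
      have hδφ : δ * φ Λ ≤ 0 := by linarith [hpen Λ]
      exact le_antisymm (nonpos_of_mul_nonpos_right hδφ hδ) (hφ_nonneg Λ)
    have hΛc : Λ = fun _ => Λ i₀ := funext (hφ_eq_zero Λ hφΛ)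
    refine ⟨Λ i₀, hΛ i₀, congrFun hΛc, fun x hx μ hμ => ?_⟩
    rw [hΛc] at h
    simpa only [hconst] using h x hx (fun _ => μ) fun _ => hμ
  · rintro ⟨μ, -, hΛμ, hsad⟩
    obtain rfl : Λ = fun _ => μ := funext hΛμ
    intro x hx lam hlam
    rw [hconst]
    linarith [hpen lam, mul_nonneg hδ.le (hφ_nonneg lam), hsad x hx (lam i₀) (hlam i₀)]

theorem stmt_0_general (N M : ℕ) (hN : 0 < N) (n : Fin N → ℕ)
    (G : SimpleGraph (Fin N)) [DecidableRel G.Adj] (hG : G.Connected)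
    (Ω : ∀ i, Set (EuclideanSpace ℝ (Fin (n i))))
    (f : ∀ i, EuclideanSpace ℝ (Fin (n i)) → ℝ)
    (g : ∀ i, EuclideanSpace ℝ (Fin (n i)) → EuclideanSpace ℝ (Fin M))
    -- the penalty constant
    (K₀ K : ℝ)
    (hK₀ : IsGreatest {r | ∃ x : ∀ i, EuclideanSpace ℝ (Fin (n i)),
      (∀ i, x i ∈ Ω i) ∧ r = Real.sqrt (∑ i, ‖g i (x i)‖ ^ 2)} K₀)
    (hK : Real.sqrt N * K₀ < K)
    -- the consensus penalty and the two Lagrangians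
    (φ : (Fin N → EuclideanSpace ℝ (Fin M)) → ℝ)
    (hφ : ∀ lam, φ lam = (1 / 2) * ∑ i, ∑ j ∈ G.neighborFinset i, ∑ m, |lam i m - lam j m|)
    (Lt : (∀ i, EuclideanSpace ℝ (Fin (n i))) → (Fin N → EuclideanSpace ℝ (Fin M)) → ℝ)
    (hLt : ∀ x lam, Lt x lam = (∑ i, (f i (x i) + ⟪lam i, g i (x i)⟫)) - K * φ lam)
    (L : (∀ i, EuclideanSpace ℝ (Fin (n i))) → EuclideanSpace ℝ (Fin M) → ℝ)
    (hL : ∀ x μ, L x μ = (∑ i, f i (x i)) + ⟪μ, ∑ i, g i (x i)⟫)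
    -- the candidate pair
    (xs : ∀ i, EuclideanSpace ℝ (Fin (n i))) (Λs : Fin N → EuclideanSpace ℝ (Fin M))
    (hxs : ∀ i, xs i ∈ Ω i) (hΛs : ∀ i m, 0 ≤ Λs i m) :
    (∀ x : ∀ i, EuclideanSpace ℝ (Fin (n i)), (∀ i, x i ∈ Ω i) →
        ∀ lam : Fin N → EuclideanSpace ℝ (Fin M), (∀ i m, 0 ≤ lam i m) →
          Lt xs lam ≤ Lt xs Λs ∧ Lt xs Λs ≤ Lt x Λs) ↔
      ∃ lams : EuclideanSpace ℝ (Fin M), (∀ m, 0 ≤ lams m) ∧ (∀ i, Λs i = lams) ∧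
        ∀ x : ∀ i, EuclideanSpace ℝ (Fin (n i)), (∀ i, x i ∈ Ω i) →
          ∀ μ : EuclideanSpace ℝ (Fin M), (∀ m, 0 ≤ μ m) →
            L xs μ ≤ L xs lams ∧ L xs lams ≤ L x lams := by
  obtain rfl : φ = consensusPenalty G := funext hφ
  have i₀ : Fin N := ⟨0, hN⟩
  have hg_sum : ∑ i, ‖g i (xs i)‖ ≤ √N * K₀ := by
    simpa using (sum_le_sqrt_card_mul_sqrt_sum_sq univ fun i => ‖g i (xs i)‖).trans
      (mul_le_mul_of_nonneg_left (hK₀.2 ⟨xs, hxs, rfl⟩) (Real.sqrt_nonneg _))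
  have hconst : ∀ x μ, Lt x (fun _ => μ) = L x μ := fun x μ => by
    rw [hLt, hL, consensusPenalty_const, mul_zero, sub_zero, sum_add_distrib, inner_sum]
  have hpen : ∀ lam, Lt xs lam + (K - √N * K₀) * consensusPenalty G lam ≤ L xs (lam i₀) := by
    intro lam
    have hinner := sum_inner_le_inner_sum_add lam (fun i => g i (xs i)) i₀
      (hG.norm_sub_le_consensusPenalty lam · i₀)
    have hscaled := mul_le_mul_of_nonneg_left hg_sum (consensusPenalty_nonneg G lam)
    rw [hLt, hL, sum_add_distrib]
    linarith
  let X := {x : ∀ i, EuclideanSpace ℝ (Fin (n i)) | ∀ i, x i ∈ Ω i}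
  let Y := {μ : EuclideanSpace ℝ (Fin M) | ∀ m, 0 ≤ μ m}
  have hxsX : xs ∈ X := hxs
  have hΛsY : ∀ i, Λs i ∈ Y := hΛs
  have hsaddle := isSaddlePointOn_pi_iff_of_exact_penalty (X := X) i₀ (sub_pos.2 hK) hxsX hΛsY
    hconst (consensusPenalty_nonneg G) (fun _ h i => hG.eq_of_consensusPenalty_eq_zero h i i₀) hpen
  rw [isSaddlePointOn_iff_forall_le_and_le hxsX (show Λs ∈ {lam | ∀ i, lam i ∈ Y} from hΛsY)]
    at hsaddle
  exact hsaddle.trans <| exists_congr fun μ => and_congr_right fun hμ => and_congr_right fun _ =>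
    isSaddlePointOn_iff_forall_le_and_le hxsX hμ

/-- (Theorem 1, equivalence of statements 2 and 3.) Under the standing assumptions
(compact convex local sets, strictly convex locally Lipschitz costs, convex locally
Lipschitz constraint maps on open sets containing the local sets, Slater's condition,
connected undirected graph, `K > √N K₀`): a pair `(x*, Λ*) ∈ Ω × (ℝ^M_+)^N` is a saddle
point of the modified Lagrangian `L̃` on `Ω × (ℝ^M_+)^N` if and only if `Λ* = (λ*,…,λ*)`
for some common `λ* ∈ ℝ^M_+` and `(x*, λ*)` is a saddle point of the original Lagrangian
`L` on `Ω × ℝ^M_+`. -/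
theorem stmt_0 (N M : ℕ) (hN : 0 < N) (n : Fin N → ℕ)
    (G : SimpleGraph (Fin N)) [DecidableRel G.Adj] (hG : G.Connected)
    (Ω U : ∀ i, Set (EuclideanSpace ℝ (Fin (n i))))
    (f : ∀ i, EuclideanSpace ℝ (Fin (n i)) → ℝ)
    (g : ∀ i, EuclideanSpace ℝ (Fin (n i)) → EuclideanSpace ℝ (Fin M))
    (hΩcomp : ∀ i, IsCompact (Ω i)) (hΩconv : ∀ i, Convex ℝ (Ω i))
    (hΩne : ∀ i, (Ω i).Nonempty)
    (hUopen : ∀ i, IsOpen (U i)) (hΩU : ∀ i, Ω i ⊆ U i)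
    (hf : ∀ i, StrictConvexOn ℝ (U i) (f i)) (hflip : ∀ i, LocallyLipschitzOn (U i) (f i))
    (hg : ∀ i k, ConvexOn ℝ (U i) fun z => g i z k)
    (hglip : ∀ i, LocallyLipschitzOn (U i) (g i))
    -- Slater's constraint qualification
    (xbar : ∀ i, EuclideanSpace ℝ (Fin (n i)))
    (hxbar : xbar ∈ intrinsicInterior ℝ
      {x : ∀ i, EuclideanSpace ℝ (Fin (n i)) | ∀ i, x i ∈ Ω i})
    (hslater : ∀ k, ∑ i, g i (xbar i) k < 0)
    -- the penalty constant
    (K₀ K : ℝ)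
    (hK₀ : IsGreatest {r | ∃ x : ∀ i, EuclideanSpace ℝ (Fin (n i)),
      (∀ i, x i ∈ Ω i) ∧ r = Real.sqrt (∑ i, ‖g i (x i)‖ ^ 2)} K₀)
    (hK : Real.sqrt N * K₀ < K)
    -- the consensus penalty and the two Lagrangians
    (φ : (Fin N → EuclideanSpace ℝ (Fin M)) → ℝ)
    (hφ : ∀ lam, φ lam = (1 / 2) * ∑ i, ∑ j ∈ G.neighborFinset i, ∑ m, |lam i m - lam j m|)
    (Lt : (∀ i, EuclideanSpace ℝ (Fin (n i))) → (Fin N → EuclideanSpace ℝ (Fin M)) → ℝ)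
    (hLt : ∀ x lam, Lt x lam = (∑ i, (f i (x i) + ⟪lam i, g i (x i)⟫)) - K * φ lam)
    (L : (∀ i, EuclideanSpace ℝ (Fin (n i))) → EuclideanSpace ℝ (Fin M) → ℝ)
    (hL : ∀ x μ, L x μ = (∑ i, f i (x i)) + ⟪μ, ∑ i, g i (x i)⟫)
    -- the candidate pair
    (xs : ∀ i, EuclideanSpace ℝ (Fin (n i))) (Λs : Fin N → EuclideanSpace ℝ (Fin M))
    (hxs : ∀ i, xs i ∈ Ω i) (hΛs : ∀ i m, 0 ≤ Λs i m) :
    (∀ x : ∀ i, EuclideanSpace ℝ (Fin (n i)), (∀ i, x i ∈ Ω i) →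
        ∀ lam : Fin N → EuclideanSpace ℝ (Fin M), (∀ i m, 0 ≤ lam i m) →
          Lt xs lam ≤ Lt xs Λs ∧ Lt xs Λs ≤ Lt x Λs) ↔
      ∃ lams : EuclideanSpace ℝ (Fin M), (∀ m, 0 ≤ lams m) ∧ (∀ i, Λs i = lams) ∧
        ∀ x : ∀ i, EuclideanSpace ℝ (Fin (n i)), (∀ i, x i ∈ Ω i) →
          ∀ μ : EuclideanSpace ℝ (Fin M), (∀ m, 0 ≤ μ m) →
            L xs μ ≤ L xs lams ∧ L xs lams ≤ L x lams :=
  stmt_0_general N M hN n G hG Ω f g K₀ K hK₀ hK φ hφ Lt hLt L hL xs Λs hxs hΛs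
end

section
/- (Key inequality in the proof of Lemma 5.) Let G be a connected undirected graph on {1,…,N} with neighbor sets N_i, and let λ = (λ_1,…,λ_N) ∈ (ℝ^M_+)^N. Define φ(λ) = (1/2) Σ_{i=1}^N Σ_{j ∈ N_i} ‖λ_i − λ_j‖_1. Then d_S(λ) ≤ √N · φ(λ), and the inequality is strict whenever λ ∉ S (equivalently, √N φ(λ) = d_S(λ) if and only if λ ∈ S, in which case both sides are 0). -/
/-
Along a path in `G`, the triangle inequality bounds the ℓ¹ distance between any two components
`λ_a, λ_b` by the sum of the ℓ¹ edge lengths, which is `φ(λ)` (each edge is counted twice in the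
neighbour sum). Hence every `‖λ_i - λ_{i₀}‖₂ ≤ ‖λ_i - λ_{i₀}‖₁ ≤ φ`, so the consensus point
`(λ_{i₀}, …, λ_{i₀}) ∈ S` is within `√(N - 1) · φ` of `λ`. Since `φ = 0` exactly on `S`, the gap
between `√(N - 1)` and `√N` makes the inequality strict off `S`.
-/

open Finset Metric

section GraphSums

variable {V : Type*} [Fintype V] (G : SimpleGraph V) [DecidableRel G.Adj]

theorem SimpleGraph.sum_darts_eq_sum_neighborFinset [DecidableEq V] {M : Type*} [AddCommMonoid M]
    (F : V → V → M) :
    ∑ d : G.Dart, F d.fst d.snd = ∑ v, ∑ w ∈ G.neighborFinset v, F v w := by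
  rw [← sum_fiberwise univ (fun d : G.Dart => d.fst)]
  refine sum_congr rfl fun v _ => ?_
  rw [G.dart_fst_fiber v, sum_image fun _ _ _ _ h => G.dartOfNeighborSet_injective v h]
  exact (sum_subtype _ (fun w => G.mem_neighborFinset v w) (F v)).symm

theorem SimpleGraph.sum_darts_edge_eq_two_nsmul_sum_edgeFinset {M : Type*} [AddCommMonoid M]
    (g : Sym2 V → M) :
    ∑ d : G.Dart, g d.edge = 2 • ∑ e ∈ G.edgeFinset, g e := by
  classical
  rw [← sum_fiberwise_of_maps_to (g := SimpleGraph.Dart.edge) (t := G.edgeFinset)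
    fun d _ => G.mem_edgeFinset.mpr d.edge_mem, smul_sum]
  refine sum_congr rfl fun e he => ?_
  rw [sum_congr rfl fun d hd => congrArg g (mem_filter.mp hd).2, sum_const,
    G.dart_edge_fiber_card e (G.mem_edgeFinset.mp he)]

end GraphSums

section PiLp

variable {ι : Type*} [Fintype ι]

theorem PiLp.dist_le_sum_dist_of_L2 {β : ι → Type*} [∀ i, SeminormedAddCommGroup (β i)]
    (x y : PiLp 2 β) : dist x y ≤ ∑ i, dist (x i) (y i) := by
  rw [PiLp.dist_eq_of_L2]
  exact Real.sqrt_le_iff.mpr ⟨by positivity, sum_sq_le_sq_sum_of_nonneg fun _ _ => dist_nonneg⟩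

theorem PiLp.dist_toLp_const_le {E : Type*} [SeminormedAddCommGroup E]
    (x : PiLp 2 fun _ : ι => E) (i₀ : ι) {C : ℝ} (hC : ∀ i, dist (x i) (x i₀) ≤ C) :
    dist x (WithLp.toLp 2 fun _ => x i₀) ≤ √(Fintype.card ι - 1) * C := by
  classical
  have hC₀ : 0 ≤ C := dist_self (x i₀) ▸ hC i₀
  rw [PiLp.dist_eq_of_L2, ← Real.sqrt_sq hC₀, ← Real.sqrt_mul' _ (sq_nonneg C)]
  refine Real.sqrt_le_sqrt ?_
  calc ∑ i, dist (x i) (x i₀) ^ 2 = ∑ i ∈ univ.erase i₀, dist (x i) (x i₀) ^ 2 := by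
        rw [sum_erase _ (by simp)]
    _ ≤ ∑ i ∈ univ.erase i₀, C ^ 2 := sum_le_sum fun i _ => pow_le_pow_left₀ dist_nonneg (hC i) 2
    _ = (Fintype.card ι - 1) * C ^ 2 := by
        rw [sum_const, card_erase_of_mem (mem_univ _), card_univ, nsmul_eq_mul,
          Nat.cast_pred (Fintype.card_pos_iff.mpr ⟨i₀⟩)]

end PiLp

section EdgeLength

variable {V X : Type*} [PseudoMetricSpace X] (f : V → X)

def edgeLength : Sym2 V → ℝ :=
  Sym2.lift ⟨fun v w => dist (f v) (f w), fun _ _ => dist_comm _ _⟩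

@[simp]
theorem edgeLength_mk (v w : V) : edgeLength f s(v, w) = dist (f v) (f w) := rfl

theorem edgeLength_nonneg (e : Sym2 V) : 0 ≤ edgeLength f e := by
  induction e with
  | _ v w => exact dist_nonneg

theorem dist_le_sum_edgeLength_edges {G : SimpleGraph V} {a b : V} (w : G.Walk a b) :
    dist (f a) (f b) ≤ (w.edges.map (edgeLength f)).sum := by
  induction w with
  | nil => simp
  | @cons _ c _ _ _ ih =>
    rw [SimpleGraph.Walk.edges_cons, List.map_cons, List.sum_cons, edgeLength_mk]
    exact (dist_triangle _ (f c) _).trans (add_le_add_right ih _)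

variable [Fintype V] {G : SimpleGraph V} [DecidableRel G.Adj]

theorem dist_le_sum_edgeLength_edgeFinset {a b : V} (h : G.Reachable a b) :
    dist (f a) (f b) ≤ ∑ e ∈ G.edgeFinset, edgeLength f e := by
  classical
  obtain ⟨w⟩ := h
  let p := w.toPath
  calc dist (f a) (f b) ≤ (p.1.edges.map (edgeLength f)).sum := dist_le_sum_edgeLength_edges f p.1
    _ = ∑ e ∈ p.1.edges.toFinset, edgeLength f e := (List.sum_toFinset _ p.2.edges_nodup).symm
    _ ≤ ∑ e ∈ G.edgeFinset, edgeLength f e :=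
      sum_le_sum_of_subset_of_nonneg
        (fun e he => G.mem_edgeFinset.mpr (p.1.edges_subset_edgeSet (List.mem_toFinset.mp he)))
        fun e _ _ => edgeLength_nonneg f e

theorem dist_le_half_sum_neighborFinset {a b : V} (h : G.Reachable a b) :
    dist (f a) (f b) ≤ (1 / 2) * ∑ v, ∑ w ∈ G.neighborFinset v, dist (f v) (f w) := by
  classical
  rw [← G.sum_darts_eq_sum_neighborFinset]
  have := G.sum_darts_edge_eq_two_nsmul_sum_edgeFinset (edgeLength f)
  simp only [SimpleGraph.Dart.edge, edgeLength_mk, nsmul_eq_mul] at this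
  rw [this]
  linarith [dist_le_sum_edgeLength_edgeFinset f h]

end EdgeLength

/-- (Key inequality in the proof of Lemma 5.) Let `G` be a connected undirected graph on
`{1,…,N}` and `λ = (λ_1,…,λ_N) ∈ (ℝ^M_+)^N`. With `φ(λ) = (1/2) Σ_i Σ_{j ∈ N_i} ‖λ_i − λ_j‖₁`,
one has `d_S(λ) ≤ √N · φ(λ)`, with equality holding exactly when `λ ∈ S` (the consensus set),
in which case both sides are `0`. -/
theorem stmt_5 (N M : ℕ) (G : SimpleGraph (Fin N)) [DecidableRel G.Adj] (hG : G.Connected)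
    (lam : PiLp 2 (fun _ : Fin N => EuclideanSpace ℝ (Fin M)))
    (hlam : ∀ i k, 0 ≤ lam i k)
    (S : Set (PiLp 2 (fun _ : Fin N => EuclideanSpace ℝ (Fin M))))
    (hS : S = {μ | (∀ i k, 0 ≤ μ i k) ∧ ∀ i j, μ i = μ j})
    (φ : ℝ) (hφ : φ = (1 / 2) * ∑ i, ∑ j ∈ G.neighborFinset i, ∑ m, |lam i m - lam j m|) :
    Metric.infDist lam S ≤ Real.sqrt N * φ ∧
      (Real.sqrt N * φ = Metric.infDist lam S ↔ lam ∈ S) ∧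
      (lam ∈ S → φ = 0 ∧ Metric.infDist lam S = 0) := by
  set ℓ₁ : Fin N → PiLp 1 (fun _ : Fin M => ℝ) := fun i => WithLp.toLp 1 (lam i).ofLp
  have hφ₁ : φ = (1 / 2) * ∑ i, ∑ j ∈ G.neighborFinset i, dist (ℓ₁ i) (ℓ₁ j) := by
    simp [hφ, ℓ₁, PiLp.dist_eq_of_L1, Real.dist_eq]
  have hφ_nonneg : 0 ≤ φ := by rw [hφ₁]; positivity
  have hdist_le : ∀ i j, dist (lam i) (lam j) ≤ φ := fun i j =>
    calc dist (lam i) (lam j) ≤ dist (ℓ₁ i) (ℓ₁ j) := by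
          simpa [ℓ₁, PiLp.dist_eq_of_L1] using PiLp.dist_le_sum_dist_of_L2 (lam i) (lam j)
      _ ≤ φ := hφ₁ ▸ dist_le_half_sum_neighborFinset ℓ₁ (hG.preconnected i j)
  obtain ⟨i₀⟩ := hG.nonempty
  have hmem : lam ∈ S ↔ φ = 0 := by
    simp only [hS, Set.mem_ofPred_eq, hlam, implies_true, true_and]
    refine ⟨fun h => by simp [hφ, fun i => h i i₀], fun h₀ i j => ?_⟩
    have hℓ₁ := dist_le_half_sum_neighborFinset ℓ₁ (hG.preconnected i j)
    rw [← hφ₁, h₀] at hℓ₁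
    exact WithLp.ofLp_injective 2 (WithLp.toLp_injective 1 (dist_le_zero.mp hℓ₁))
  have hμ : WithLp.toLp 2 (fun _ => lam i₀) ∈ S := hS ▸ ⟨fun _ => hlam i₀, fun _ _ => rfl⟩
  have hinfDist : infDist lam S ≤ √(N - 1) * φ := by
    simpa using (infDist_le_dist_of_mem hμ).trans (PiLp.dist_toLp_const_le lam i₀ (hdist_le · i₀))
  have hsqrt : √((N : ℝ) - 1) < √N :=
    Real.sqrt_lt_sqrt (sub_nonneg.mpr (Nat.one_le_cast.mpr (Fin.pos i₀))) (sub_lt_self _ one_pos)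
  refine ⟨hinfDist.trans (mul_le_mul_of_nonneg_right hsqrt.le hφ_nonneg),
    ⟨fun h => hmem.mpr ?_, fun h => ?_⟩, fun h => ⟨hmem.mp h, infDist_zero_of_mem h⟩⟩
  · by_contra hφ₀
    linarith [mul_lt_mul_of_pos_right hsqrt (lt_of_le_of_ne hφ_nonneg (Ne.symm hφ₀))]
  · rw [hmem.mp h, infDist_zero_of_mem h, mul_zero]
end

section
/- (Exact penalization, part 4 of Lemma 1.) Let U ⊆ ℝⁿ be an open set, Ω ⊆ U a nonempty closed convex set, and f : U → ℝ Lipschitz continuous on U with Lipschitz constant K₀. If K > K₀, then x* minimizes f over Ω if and only if x* minimizes the penalized function x ↦ f(x) + K d_Ω(x) over U. -/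
/-- (Exact penalization, part 4 of Lemma 1.) Let `U ⊆ ℝⁿ` be open, `Ω ⊆ U` a nonempty
closed convex set, and `f : U → ℝ` Lipschitz on `U` with constant `K₀`. If `K > K₀`, then
`x*` minimizes `f` over `Ω` if and only if `x*` minimizes `x ↦ f(x) + K d_Ω(x)` over `U`. -/
theorem stmt_6 (n : ℕ) (U Ω : Set (EuclideanSpace ℝ (Fin n)))
    (hUopen : IsOpen U) (hΩclosed : IsClosed Ω) (hΩconv : Convex ℝ Ω)
    (hΩne : Ω.Nonempty) (hΩU : Ω ⊆ U)
    (f : EuclideanSpace ℝ (Fin n) → ℝ) (K₀ : ℝ)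
    (hf : ∀ x ∈ U, ∀ y ∈ U, |f x - f y| ≤ K₀ * ‖x - y‖)
    (K : ℝ) (hK : K₀ < K)
    (xs : EuclideanSpace ℝ (Fin n)) (hxs : xs ∈ U) :
    (xs ∈ Ω ∧ ∀ y ∈ Ω, f xs ≤ f y) ↔
      (∀ y ∈ U, f xs + K * Metric.infDist xs Ω ≤ f y + K * Metric.infDist y Ω) := by
  constructor
  · rintro ⟨hxΩ, hmin⟩ y hyU
    obtain ⟨p, hpΩ, hp⟩ := hΩclosed.exists_infDist_eq_dist hΩne y
    have h0 : Metric.infDist xs Ω = 0 := Metric.infDist_zero_of_mem hxΩ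
    have h1 : f xs ≤ f p := hmin p hpΩ
    have h2 : f p - f y ≤ K₀ * ‖p - y‖ := le_trans (le_abs_self _) (hf p (hΩU hpΩ) y hyU)
    have h3 : K₀ * ‖p - y‖ ≤ K * ‖p - y‖ :=
      mul_le_mul_of_nonneg_right hK.le (norm_nonneg _)
    have h4 : ‖p - y‖ = Metric.infDist y Ω := by
      rw [← dist_eq_norm, dist_comm, ← hp]
    have h5 : K * ‖p - y‖ = K * Metric.infDist y Ω := by rw [h4]
    rw [h0]
    linarith
  · intro hmin
    obtain ⟨p, hpΩ, hp⟩ := hΩclosed.exists_infDist_eq_dist hΩne xs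
    have hd : Metric.infDist xs Ω = ‖p - xs‖ := by rw [hp, dist_comm, dist_eq_norm]
    have h1 : f xs + K * Metric.infDist xs Ω ≤ f p + K * Metric.infDist p Ω :=
      hmin p (hΩU hpΩ)
    have h0 : Metric.infDist p Ω = 0 := Metric.infDist_zero_of_mem hpΩ
    rw [h0, mul_zero, add_zero] at h1
    have h2 : f p - f xs ≤ K₀ * ‖p - xs‖ := le_trans (le_abs_self _) (hf p (hΩU hpΩ) xs hxs)
    have hdle : ‖p - xs‖ ≤ 0 := by
      by_contra hpos
      push_neg at hpos
      have h3 : K * Metric.infDist xs Ω = K * ‖p - xs‖ := by rw [hd]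
      nlinarith [mul_pos (sub_pos.2 hK) hpos]
    have hd0 : Metric.infDist xs Ω = 0 := by
      rw [hd]; exact le_antisymm hdle (norm_nonneg _)
    have hxΩ : xs ∈ Ω := by
      rw [← hΩclosed.closure_eq]
      exact (Metric.mem_closure_iff_infDist_zero hΩne).mpr hd0
    refine ⟨hxΩ, fun y hyΩ => ?_⟩
    have := hmin y (hΩU hyΩ)
    rw [hd0, Metric.infDist_zero_of_mem hyΩ] at this
    linarith
end

section
/- (Theorem 4, O(1/t) convergence rate of the averaged trajectories, stated with the integral saddle inequalities as hypotheses.) Let (x*, λ̃*) be a saddle point of L̃ on Ω × (ℝ^M_+)^N. Let x : [0,∞) → Ω and λ : [0,∞) → (ℝ^M_+)^N be continuous, with λ bounded, and suppose that for every x̲ ∈ Ω, λ̲ ∈ (ℝ^M_+)^N, and t > 0: (1/2)‖x(t) − x̲‖² − (1/2)‖x(0) − x̲‖² ≤ ∫_0^t [L̃(x̲, λ(τ)) − L̃(x(τ), λ(τ))] dτ and (1/2)‖λ(t) − λ̲‖² − (1/2)‖λ(0) − λ̲‖² ≤ ∫_0^t [L̃(x(τ), λ(τ)) − L̃(x(τ),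 λ̲)] dτ. Define time averages x̂(t) = (1/t)∫_0^t x(τ) dτ and λ̂(t) = (1/t)∫_0^t λ(τ) dτ. Then there exists a constant θ₀ > 0 such that |L̃(x̂(t), λ̂(t)) − L̃(x*, λ̃*)| ≤ θ₀/t for all t > 0. -/
/-!
Put `x̲ = x*`, `λ̲ = λ̂(t)` and `x̲ = x̂(t)`, `λ̲ = λ̃*` into the integral inequalities and drop
the nonnegative terms at time `t`. The terms at time `0` are bounded by a constant `c`, because
`x̲` and `λ̲` range over compact sets containing the trajectories and the saddle point. Jensen's
inequality for the convex function `L̃(·, λ̂)` and the concave function `L̃(x̂, ·)` together with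
the saddle inequalities then give
`t L̃(x̂, λ̂) ≤ ∫₀ᵗ L̃(x, λ̂) ≤ ∫₀ᵗ L̃(x*, λ) + 2c ≤ t L̃(x*, λ̃*) + 2c` and
`t L̃(x*, λ̃*) ≤ ∫₀ᵗ L̃(x, λ̃*) ≤ ∫₀ᵗ L̃(x̂, λ) + 2c ≤ t L̃(x̂, λ̂) + 2c`.
-/

open MeasureTheory Set Function
open scoped Interval RealInnerProductSpace

section IntervalAverage

lemma volume_uIoc_ne_zero {a b : ℝ} (hab : a ≠ b) : volume (Ι a b) ≠ 0 := by
  simp [Real.volume_uIoc, sub_ne_zero, hab.symm]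

lemma volume_uIoc_ne_top {a b : ℝ} : volume (Ι a b) ≠ ⊤ := by
  simp [Real.volume_uIoc]

lemma ae_restrict_uIoc_mem_of_mapsTo {α : Type*} {a b : ℝ} {u : ℝ → α} {s : Set α}
    (hab : a ≤ b) (hus : MapsTo u (Icc a b) s) : ∀ᵐ τ ∂volume.restrict (Ι a b), u τ ∈ s := by
  rw [uIoc_of_le hab]
  exact ae_restrict_of_forall_mem measurableSet_Ioc fun τ hτ => hus (Ioc_subset_Icc_self hτ)

lemma ContinuousOn.integrableOn_uIoc_of_Icc {E : Type*} [NormedAddCommGroup E] {a b : ℝ}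
    {u : ℝ → E} (hab : a ≤ b) (hu : ContinuousOn u (Icc a b)) : IntegrableOn u (Ι a b) := by
  rw [uIoc_of_le hab]
  exact hu.integrableOn_Icc.mono_set Ioc_subset_Icc_self

variable {E : Type*} [NormedAddCommGroup E] [NormedSpace ℝ E] [CompleteSpace E]
  {a b : ℝ} {u : ℝ → E} {s : Set E}

theorem Convex.intervalAverage_mem (hs : Convex ℝ s) (hsc : IsClosed s) (hab : a < b)
    (hu : ContinuousOn u (Icc a b)) (hus : MapsTo u (Icc a b) s) :
    (⨍ τ in a..b, u τ) ∈ s :=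
  hs.set_average_mem hsc (volume_uIoc_ne_zero hab.ne) volume_uIoc_ne_top
    (ae_restrict_uIoc_mem_of_mapsTo hab.le hus) (hu.integrableOn_uIoc_of_Icc hab.le)

theorem ConvexOn.mul_map_intervalAverage_le {F : E → ℝ} (hF : ConvexOn ℝ s F)
    (hFc : ContinuousOn F s) (hsc : IsClosed s) (hab : a < b)
    (hu : ContinuousOn u (Icc a b)) (hus : MapsTo u (Icc a b) s) :
    (b - a) * F (⨍ τ in a..b, u τ) ≤ ∫ τ in a..b, F (u τ) := by
  have h := hF.map_set_average_le hFc hsc (volume_uIoc_ne_zero hab.ne) volume_uIoc_ne_top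
    (ae_restrict_uIoc_mem_of_mapsTo hab.le hus) (hu.integrableOn_uIoc_of_Icc hab.le)
    ((hFc.comp hu hus).integrableOn_uIoc_of_Icc hab.le)
  rw [interval_average_eq (fun τ => F (u τ)), smul_eq_mul] at h
  exact (le_inv_mul_iff₀ (sub_pos.2 hab)).1 h

theorem ConcaveOn.integral_le_mul_map_intervalAverage {F : E → ℝ} (hF : ConcaveOn ℝ s F)
    (hFc : ContinuousOn F s) (hsc : IsClosed s) (hab : a < b)
    (hu : ContinuousOn u (Icc a b)) (hus : MapsTo u (Icc a b) s) :
    ∫ τ in a..b, F (u τ) ≤ (b - a) * F (⨍ τ in a..b, u τ) := by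
  have h := hF.neg.mul_map_intervalAverage_le hFc.neg hsc hab hu hus
  simp only [Pi.neg_apply, intervalIntegral.integral_neg, mul_neg] at h
  linarith

lemma intervalAverage_apply {ι : Type*} [Fintype ι] {X : ι → Type*}
    [∀ i, NormedAddCommGroup (X i)] [∀ i, NormedSpace ℝ (X i)] [∀ i, CompleteSpace (X i)]
    {u : ℝ → ∀ i, X i} (hu : IntervalIntegrable u volume a b) (i : ι) :
    (⨍ τ in a..b, u τ) i = ⨍ τ in a..b, u τ i := by
  rw [interval_average_eq, interval_average_eq, Pi.smul_apply]
  exact congrArg _ ((ContinuousLinearMap.proj (R := ℝ) i).intervalIntegral_comp_comm hu).symm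

lemma eq_intervalAverage_of_forall_apply {ι : Type*} [Fintype ι] {X : ι → Type*}
    [∀ i, NormedAddCommGroup (X i)] [∀ i, NormedSpace ℝ (X i)] [∀ i, CompleteSpace (X i)]
    {u : ℝ → ∀ i, X i} {t : ℝ} (ht : 0 ≤ t) (hu : ContinuousOn u (Icc 0 t)) {v : ∀ i, X i}
    (hv : ∀ i, v i = (1 / t) • ∫ τ in 0..t, u τ i) : v = ⨍ τ in 0..t, u τ := by
  ext i
  rw [hv, intervalAverage_apply (hu.intervalIntegrable_of_Icc ht), interval_average_eq, sub_zero,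
    one_div]

end IntervalAverage

section Saddle

lemma ContinuousOn.intervalIntegrable_uncurry_comp {E F : Type*} [TopologicalSpace E]
    [TopologicalSpace F] {S : Set E} {T : Set F} {L : E → F → ℝ}
    (hL : ContinuousOn (uncurry L) (S ×ˢ T)) {t : ℝ} (ht : 0 ≤ t) {p : ℝ → E} {q : ℝ → F}
    (hp : ContinuousOn p (Icc 0 t)) (hq : ContinuousOn q (Icc 0 t))
    (hpS : MapsTo p (Icc 0 t) S) (hqT : MapsTo q (Icc 0 t) T) :
    IntervalIntegrable (fun τ => L (p τ) (q τ)) volume 0 t :=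
  (hL.comp (hp.prodMk hq) fun _ hτ => ⟨hpS hτ, hqT hτ⟩).intervalIntegrable_of_Icc ht

variable {E F : Type*} [NormedAddCommGroup E] [NormedSpace ℝ E] [CompleteSpace E]
  [NormedAddCommGroup F] [NormedSpace ℝ F] [CompleteSpace F]
  {S : Set E} {T : Set F} {L : E → F → ℝ} {xs : E} {ls : F} {x : ℝ → E} {lam : ℝ → F}
  {t c : ℝ}

theorem IsSaddlePointOn.mul_map_intervalAverage_le_add (h : IsSaddlePointOn S T L xs ls)
    (hSc : IsClosed S) (hT : Convex ℝ T) (hTc : IsClosed T)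
    (hL : ContinuousOn (uncurry L) (S ×ˢ T)) (hLS : ∀ l ∈ T, ConvexOn ℝ S (L · l))
    (hxs : xs ∈ S) (ht : 0 < t) (hx : ContinuousOn x (Icc 0 t))
    (hlam : ContinuousOn lam (Icc 0 t)) (hxS : MapsTo x (Icc 0 t) S)
    (hlamT : MapsTo lam (Icc 0 t) T)
    (hxineq : -c ≤ ∫ τ in 0..t, (L xs (lam τ) - L (x τ) (lam τ)))
    (hlamineq : -c ≤ ∫ τ in 0..t, (L (x τ) (lam τ) - L (x τ) (⨍ τ in 0..t, lam τ))) :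
    t * L (⨍ τ in 0..t, x τ) (⨍ τ in 0..t, lam τ) ≤ t * L xs ls + 2 * c := by
  set lbar := ⨍ τ in 0..t, lam τ
  have hlbar : lbar ∈ T := hT.intervalAverage_mem hTc ht hlam hlamT
  have jensen : t * L (⨍ τ in 0..t, x τ) lbar ≤ ∫ τ in 0..t, L (x τ) lbar := by
    simpa using (hLS lbar hlbar).mul_map_intervalAverage_le
      (hL.comp (continuousOn_id.prodMk continuousOn_const) fun _ hy => ⟨hy, hlbar⟩)
      hSc ht hx hxS
  have saddle : ∫ τ in 0..t, L xs (lam τ) ≤ t * L xs ls := by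
    simpa using intervalIntegral.integral_mono_on ht.le
      (hL.intervalIntegrable_uncurry_comp ht.le continuousOn_const hlam (fun _ _ => hxs) hlamT)
      intervalIntegrable_const fun τ hτ => h xs hxs (lam τ) (hlamT hτ)
  have hint := hL.intervalIntegrable_uncurry_comp ht.le hx hlam hxS hlamT
  rw [intervalIntegral.integral_sub
    (hL.intervalIntegrable_uncurry_comp ht.le continuousOn_const hlam (fun _ _ => hxs) hlamT)
    hint] at hxineq
  rw [intervalIntegral.integral_sub hint
    (hL.intervalIntegrable_uncurry_comp ht.le hx continuousOn_const hxS (fun _ _ => hlbar))]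
    at hlamineq
  linarith

theorem IsSaddlePointOn.mul_le_mul_map_intervalAverage_add (h : IsSaddlePointOn S T L xs ls)
    (hS : Convex ℝ S) (hSc : IsClosed S) (hTc : IsClosed T)
    (hL : ContinuousOn (uncurry L) (S ×ˢ T)) (hLT : ∀ y ∈ S, ConcaveOn ℝ T (L y ·))
    (hls : ls ∈ T) (ht : 0 < t) (hx : ContinuousOn x (Icc 0 t))
    (hlam : ContinuousOn lam (Icc 0 t)) (hxS : MapsTo x (Icc 0 t) S)
    (hlamT : MapsTo lam (Icc 0 t) T)
    (hxineq : -c ≤ ∫ τ in 0..t, (L (⨍ τ in 0..t, x τ) (lam τ) - L (x τ) (lam τ)))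
    (hlamineq : -c ≤ ∫ τ in 0..t, (L (x τ) (lam τ) - L (x τ) ls)) :
    t * L xs ls ≤ t * L (⨍ τ in 0..t, x τ) (⨍ τ in 0..t, lam τ) + 2 * c := by
  set xbar := ⨍ τ in 0..t, x τ
  have hxbar : xbar ∈ S := hS.intervalAverage_mem hSc ht hx hxS
  have jensen : ∫ τ in 0..t, L xbar (lam τ) ≤ t * L xbar (⨍ τ in 0..t, lam τ) := by
    simpa using (hLT xbar hxbar).integral_le_mul_map_intervalAverage
      (hL.comp (continuousOn_const.prodMk continuousOn_id) fun _ hl => ⟨hxbar, hl⟩)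
      hTc ht hlam hlamT
  have saddle : t * L xs ls ≤ ∫ τ in 0..t, L (x τ) ls := by
    simpa using intervalIntegral.integral_mono_on ht.le intervalIntegrable_const
      (hL.intervalIntegrable_uncurry_comp ht.le hx continuousOn_const hxS (fun _ _ => hls))
      fun τ hτ => h (x τ) (hxS hτ) ls hls
  have hint := hL.intervalIntegrable_uncurry_comp ht.le hx hlam hxS hlamT
  rw [intervalIntegral.integral_sub
    (hL.intervalIntegrable_uncurry_comp ht.le continuousOn_const hlam (fun _ _ => hxbar) hlamT)
    hint] at hxineq
  rw [intervalIntegral.integral_sub hint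
    (hL.intervalIntegrable_uncurry_comp ht.le hx continuousOn_const hxS (fun _ _ => hls))]
    at hlamineq
  linarith

theorem IsSaddlePointOn.abs_intervalAverage_sub_le (h : IsSaddlePointOn S T L xs ls)
    (hS : Convex ℝ S) (hSc : IsClosed S) (hT : Convex ℝ T) (hTc : IsClosed T)
    (hL : ContinuousOn (uncurry L) (S ×ˢ T)) (hLS : ∀ l ∈ T, ConvexOn ℝ S (L · l))
    (hLT : ∀ y ∈ S, ConcaveOn ℝ T (L y ·)) (hxs : xs ∈ S) (hls : ls ∈ T) (ht : 0 < t)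
    (hx : ContinuousOn x (Icc 0 t)) (hlam : ContinuousOn lam (Icc 0 t))
    (hxS : MapsTo x (Icc 0 t) S) (hlamT : MapsTo lam (Icc 0 t) T)
    (hxineq : ∀ y ∈ S, -c ≤ ∫ τ in 0..t, (L y (lam τ) - L (x τ) (lam τ)))
    (hlamineq : ∀ l ∈ T, -c ≤ ∫ τ in 0..t, (L (x τ) (lam τ) - L (x τ) l)) :
    |L (⨍ τ in 0..t, x τ) (⨍ τ in 0..t, lam τ) - L xs ls| ≤ 2 * c / t := by
  have upper := h.mul_map_intervalAverage_le_add hSc hT hTc hL hLS hxs ht hx hlam hxS hlamT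
    (hxineq xs hxs) (hlamineq _ (hT.intervalAverage_mem hTc ht hlam hlamT))
  have lower := h.mul_le_mul_map_intervalAverage_add hS hSc hTc hL hLT hls ht hx hlam hxS hlamT
    (hxineq _ (hS.intervalAverage_mem hSc ht hx hxS)) (hlamineq ls hls)
  rw [abs_sub_le_iff, le_div_iff₀ ht, le_div_iff₀ ht]
  constructor <;> linarith

theorem IsSaddlePointOn.exists_abs_intervalAverage_sub_le_div (h : IsSaddlePointOn S T L xs ls)
    (hS : Convex ℝ S) (hScomp : IsCompact S) (hT : Convex ℝ T) (hTcomp : IsCompact T)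
    (hL : ContinuousOn (uncurry L) (S ×ˢ T)) (hLS : ∀ l ∈ T, ConvexOn ℝ S (L · l))
    (hLT : ∀ y ∈ S, ConcaveOn ℝ T (L y ·)) (hxs : xs ∈ S) (hls : ls ∈ T)
    (hx : ContinuousOn x (Ici 0)) (hlam : ContinuousOn lam (Ici 0))
    (hxS : MapsTo x (Ici 0) S) (hlamT : MapsTo lam (Ici 0) T)
    {V : E → E → ℝ} {W : F → F → ℝ} (hV : ∀ a y, 0 ≤ V a y) (hW : ∀ a l, 0 ≤ W a l)
    (hVc : ContinuousOn (V (x 0)) S) (hWc : ContinuousOn (W (lam 0)) T)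
    (hxineq : ∀ y ∈ S, ∀ t > 0,
      V (x t) y - V (x 0) y ≤ ∫ τ in 0..t, (L y (lam τ) - L (x τ) (lam τ)))
    (hlamineq : ∀ l ∈ T, ∀ t > 0,
      W (lam t) l - W (lam 0) l ≤ ∫ τ in 0..t, (L (x τ) (lam τ) - L (x τ) l)) :
    ∃ θ > 0, ∀ t > 0, |L (⨍ τ in 0..t, x τ) (⨍ τ in 0..t, lam τ) - L xs ls| ≤ θ / t := by
  obtain ⟨c, hc1, hc⟩ := (bddAbove_iff_exists_ge 1).1 <|
    (hScomp.bddAbove_image hVc).union (hTcomp.bddAbove_image hWc)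
  refine ⟨2 * c, by positivity, fun t ht => ?_⟩
  have hIcc : Icc 0 t ⊆ Ici 0 := Icc_subset_Ici_self
  refine h.abs_intervalAverage_sub_le hS hScomp.isClosed hT hTcomp.isClosed hL hLS hLT hxs hls ht
    (hx.mono hIcc) (hlam.mono hIcc) (hxS.mono_left hIcc) (hlamT.mono_left hIcc)
    (fun y hy => ?_) (fun l hl => ?_)
  · linarith [hxineq y hy t ht, hV (x t) y, hc _ (Or.inl ⟨y, hy, rfl⟩)]
  · linarith [hlamineq l hl t ht, hW (lam t) l, hc _ (Or.inr ⟨l, hl, rfl⟩)]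

end Saddle

section Lagrangian

lemma convexOn_finsetSum {E ι : Type*} [AddCommGroup E] [Module ℝ E] {s : Set E}
    (hs : Convex ℝ s) (t : Finset ι) {F : ι → E → ℝ} (hF : ∀ i ∈ t, ConvexOn ℝ s (F i)) :
    ConvexOn ℝ s fun z => ∑ i ∈ t, F i z := by
  classical
  induction t using Finset.cons_induction with
  | empty => simpa using convexOn_const 0 hs
  | cons a t ha ih =>
    simp only [Finset.sum_cons]
    exact (hF a (Finset.mem_cons_self a t)).add (ih fun i hi => hF i (Finset.mem_cons_of_mem hi))

lemma convexOn_univ_pi_sum {ι : Type*} [Fintype ι] {X : ι → Type*} [∀ i, AddCommGroup (X i)]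
    [∀ i, Module ℝ (X i)] {s : ∀ i, Set (X i)} {F : ∀ i, X i → ℝ}
    (hF : ∀ i, ConvexOn ℝ (s i) (F i)) :
    ConvexOn ℝ (univ.pi s) fun x => ∑ i, F i (x i) := by
  refine ⟨convex_pi fun i _ => (hF i).1, fun x hx y hy a b ha hb hab => ?_⟩
  simp only [Pi.add_apply, Pi.smul_apply, smul_eq_mul, Finset.mul_sum, ← Finset.sum_add_distrib]
  exact Finset.sum_le_sum fun i _ => (hF i).2 (hx i trivial) (hy i trivial) ha hb hab

lemma convexOn_inner_of_nonneg {E κ : Type*} [AddCommGroup E] [Module ℝ E] [Fintype κ]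
    {s : Set E} (hs : Convex ℝ s) {g : E → EuclideanSpace ℝ κ} (hg : ∀ k, ConvexOn ℝ s (g · k))
    {μ : EuclideanSpace ℝ κ} (hμ : ∀ k, 0 ≤ μ k) : ConvexOn ℝ s fun z => ⟪μ, g z⟫ := by
  simp only [PiLp.inner_apply, RCLike.inner_apply, conj_trivial]
  exact convexOn_finsetSum hs _ fun k _ => by simpa [mul_comm] using (hg k).smul (hμ k)

lemma convexOn_abs_sub_apply {ι κ : Type*} (i j : ι) (m : κ) :
    ConvexOn ℝ univ fun lam : ι → EuclideanSpace ℝ κ => |lam i m - lam j m| := by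
  refine ⟨convex_univ, fun u _ v _ a b ha hb _ => ?_⟩
  calc |(a • u + b • v) i m - (a • u + b • v) j m|
      = |a * (u i m - u j m) + b * (v i m - v j m)| := by
        simp only [Pi.add_apply, Pi.smul_apply, PiLp.add_apply, PiLp.smul_apply, smul_eq_mul]
        ring_nf
    _ ≤ a * |u i m - u j m| + b * |v i m - v j m| := by
      grw [abs_add_le, abs_mul, abs_mul, abs_of_nonneg ha, abs_of_nonneg hb]

lemma isClosed_setOf_nonneg_apply {ι κ : Type*} :
    IsClosed {μ : ι → EuclideanSpace ℝ κ | ∀ i m, 0 ≤ μ i m} := by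
  simp only [ofPred_forall]
  exact isClosed_iInter fun i => isClosed_iInter fun m =>
    isClosed_le continuous_const (by fun_prop)

lemma convex_setOf_nonneg_apply {ι κ : Type*} :
    Convex ℝ {μ : ι → EuclideanSpace ℝ κ | ∀ i m, 0 ≤ μ i m} :=
  fun _ hμ _ hν a b ha hb _ i m => by
    simpa using add_nonneg (mul_nonneg ha (hμ i m)) (mul_nonneg hb (hν i m))

variable {ι κ : Type*} [Fintype ι] [Fintype κ]

noncomputable def graphPenalty (G : SimpleGraph ι) [DecidableRel G.Adj]
    (lam : ι → EuclideanSpace ℝ κ) : ℝ :=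
  (1 / 2) * ∑ i, ∑ j ∈ G.neighborFinset i, ∑ m, |lam i m - lam j m|

lemma convexOn_graphPenalty (G : SimpleGraph ι) [DecidableRel G.Adj] :
    ConvexOn ℝ univ (graphPenalty (κ := κ) G) := by
  have h : ConvexOn ℝ univ fun lam : ι → EuclideanSpace ℝ κ =>
      ∑ i, ∑ j ∈ G.neighborFinset i, ∑ m, |lam i m - lam j m| :=
    convexOn_finsetSum convex_univ _ fun i _ => convexOn_finsetSum convex_univ _ fun j _ =>
      convexOn_finsetSum convex_univ _ fun m _ => convexOn_abs_sub_apply i j m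
  exact h.smul (by norm_num)

lemma continuous_graphPenalty (G : SimpleGraph ι) [DecidableRel G.Adj] :
    Continuous (graphPenalty (κ := κ) G) := by
  unfold graphPenalty
  fun_prop

variable {X : ι → Type*}

/-- The modified Lagrangian `L̃` of the paper, for an arbitrary penalty `φ`. -/
noncomputable def penalizedLagrangian (f : ∀ i, X i → ℝ) (g : ∀ i, X i → EuclideanSpace ℝ κ)
    (K : ℝ) (φ : (ι → EuclideanSpace ℝ κ) → ℝ) (x : ∀ i, X i) (lam : ι → EuclideanSpace ℝ κ) : ℝ :=
  (∑ i, (f i (x i) + ⟪lam i, g i (x i)⟫)) - K * φ lam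

variable {f : ∀ i, X i → ℝ} {g : ∀ i, X i → EuclideanSpace ℝ κ} {K : ℝ}
  {φ : (ι → EuclideanSpace ℝ κ) → ℝ} {s : ∀ i, Set (X i)}

lemma convexOn_penalizedLagrangian [∀ i, AddCommGroup (X i)] [∀ i, Module ℝ (X i)]
    (hf : ∀ i, ConvexOn ℝ (s i) (f i)) (hg : ∀ i k, ConvexOn ℝ (s i) (g i · k))
    {lam : ι → EuclideanSpace ℝ κ} (hlam : ∀ i k, 0 ≤ lam i k) :
    ConvexOn ℝ (univ.pi s) (penalizedLagrangian f g K φ · lam) := by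
  have h := convexOn_univ_pi_sum fun i =>
    (hf i).add (convexOn_inner_of_nonneg (hf i).1 (hg i) (hlam i))
  exact h.sub (concaveOn_const _ h.1)

lemma concaveOn_penalizedLagrangian (hφ : ConvexOn ℝ univ φ) (hK : 0 ≤ K) (x : ∀ i, X i) :
    ConcaveOn ℝ univ (penalizedLagrangian f g K φ x) := by
  have affine : ConcaveOn ℝ univ fun lam : ι → EuclideanSpace ℝ κ =>
      ∑ i, (f i (x i) + ⟪lam i, g i (x i)⟫) := by
    refine ⟨convex_univ, fun u _ v _ a b _ _ hab => le_of_eq ?_⟩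
    simp only [Pi.add_apply, Pi.smul_apply, inner_add_left, inner_smul_left, smul_eq_mul,
      Finset.mul_sum, ← Finset.sum_add_distrib, conj_trivial]
    refine Finset.sum_congr rfl fun i _ => ?_
    linear_combination (f i (x i)) * hab
  exact affine.sub (hφ.smul hK)

lemma continuousOn_penalizedLagrangian [∀ i, TopologicalSpace (X i)]
    (hf : ∀ i, ContinuousOn (f i) (s i)) (hg : ∀ i, ContinuousOn (g i) (s i)) (hφ : Continuous φ) :
    ContinuousOn (uncurry (penalizedLagrangian f g K φ)) (univ.pi s ×ˢ univ) := by
  have hproj : ∀ i, ContinuousOn (fun p : (∀ i, X i) × (ι → EuclideanSpace ℝ κ) => p.1 i)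
      (univ.pi s ×ˢ univ) := fun i => by fun_prop
  have hmaps : ∀ i, MapsTo (fun p : (∀ i, X i) × (ι → EuclideanSpace ℝ κ) => p.1 i)
      (univ.pi s ×ˢ univ) (s i) := fun i _ hp => hp.1 i trivial
  refine .sub (continuousOn_finsetSum _ fun i _ => ((hf i).comp (hproj i) (hmaps i)).add ?_)
    (continuousOn_const.mul (hφ.comp continuous_snd).continuousOn)
  exact ((continuous_apply i).comp continuous_snd).continuousOn.inner
    ((hg i).comp (hproj i) (hmaps i))

end Lagrangian

theorem stmt_13_general (N M : ℕ) (n : Fin N → ℕ)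
    (G : SimpleGraph (Fin N)) [DecidableRel G.Adj]
    (Ω U : ∀ i, Set (EuclideanSpace ℝ (Fin (n i))))
    (f : ∀ i, EuclideanSpace ℝ (Fin (n i)) → ℝ)
    (g : ∀ i, EuclideanSpace ℝ (Fin (n i)) → EuclideanSpace ℝ (Fin M))
    (hΩcomp : ∀ i, IsCompact (Ω i)) (hΩconv : ∀ i, Convex ℝ (Ω i))
    (hΩU : ∀ i, Ω i ⊆ U i)
    (hf : ∀ i, StrictConvexOn ℝ (U i) (f i)) (hflip : ∀ i, LocallyLipschitzOn (U i) (f i))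
    (hg : ∀ i k, ConvexOn ℝ (U i) fun z => g i z k)
    (hglip : ∀ i, LocallyLipschitzOn (U i) (g i))
    (K : ℝ) (hK : 0 < K)
    (φ : (Fin N → EuclideanSpace ℝ (Fin M)) → ℝ)
    (hφ : ∀ lam, φ lam = (1 / 2) * ∑ i, ∑ j ∈ G.neighborFinset i, ∑ m, |lam i m - lam j m|)
    (Lt : (∀ i, EuclideanSpace ℝ (Fin (n i))) → (Fin N → EuclideanSpace ℝ (Fin M)) → ℝ)
    (hLt : ∀ x lam, Lt x lam = (∑ i, (f i (x i) + ⟪lam i, g i (x i)⟫)) - K * φ lam)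
    -- the saddle point
    (xs : ∀ i, EuclideanSpace ℝ (Fin (n i))) (lams : Fin N → EuclideanSpace ℝ (Fin M))
    (hxs : ∀ i, xs i ∈ Ω i) (hlams : ∀ i m, 0 ≤ lams i m)
    (hsaddle : ∀ x : ∀ i, EuclideanSpace ℝ (Fin (n i)), (∀ i, x i ∈ Ω i) →
      ∀ lam : Fin N → EuclideanSpace ℝ (Fin M), (∀ i m, 0 ≤ lam i m) →
        Lt xs lam ≤ Lt xs lams ∧ Lt xs lams ≤ Lt x lams)
    -- the trajectories
    (x : ℝ → ∀ i, EuclideanSpace ℝ (Fin (n i)))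
    (lam : ℝ → Fin N → EuclideanSpace ℝ (Fin M))
    (hxcont : ContinuousOn x (Set.Ici (0 : ℝ)))
    (hlamcont : ContinuousOn lam (Set.Ici (0 : ℝ)))
    (hxmem : ∀ t ≥ (0 : ℝ), ∀ i, x t i ∈ Ω i)
    (hlammem : ∀ t ≥ (0 : ℝ), ∀ i m, 0 ≤ lam t i m)
    (hlambdd : ∃ C : ℝ, ∀ t ≥ (0 : ℝ), ∀ i, ‖lam t i‖ ≤ C)
    -- the integral saddle inequalities
    (hineqx : ∀ xu : ∀ i, EuclideanSpace ℝ (Fin (n i)), (∀ i, xu i ∈ Ω i) →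
      ∀ t > (0 : ℝ),
      (1 / 2) * (∑ i, ‖x t i - xu i‖ ^ 2) - (1 / 2) * (∑ i, ‖x 0 i - xu i‖ ^ 2) ≤
        ∫ τ in (0 : ℝ)..t, (Lt xu (lam τ) - Lt (x τ) (lam τ)))
    (hineqlam : ∀ lamu : Fin N → EuclideanSpace ℝ (Fin M), (∀ i m, 0 ≤ lamu i m) →
      ∀ t > (0 : ℝ),
      (1 / 2) * (∑ i, ‖lam t i - lamu i‖ ^ 2) - (1 / 2) * (∑ i, ‖lam 0 i - lamu i‖ ^ 2) ≤
        ∫ τ in (0 : ℝ)..t, (Lt (x τ) (lam τ) - Lt (x τ) lamu))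
    -- the time averages
    (xhat : ℝ → ∀ i, EuclideanSpace ℝ (Fin (n i)))
    (lamhat : ℝ → Fin N → EuclideanSpace ℝ (Fin M))
    (hxhat : ∀ t > (0 : ℝ), ∀ i, xhat t i = (1 / t) • ∫ τ in (0 : ℝ)..t, x τ i)
    (hlamhat : ∀ t > (0 : ℝ), ∀ i, lamhat t i = (1 / t) • ∫ τ in (0 : ℝ)..t, lam τ i) :
    ∃ θ₀ > (0 : ℝ), ∀ t > (0 : ℝ),
      |Lt (xhat t) (lamhat t) - Lt xs lams| ≤ θ₀ / t := by
  obtain rfl : φ = graphPenalty G := funext hφ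
  obtain rfl : Lt = penalizedLagrangian f g K (graphPenalty G) := funext fun x => funext (hLt x)
  obtain ⟨C, hC⟩ := hlambdd
  -- compact, so that `½ ∑ ‖lam 0 i - l i‖²` is bounded for `l ∈ T`
  set T := {μ : Fin N → EuclideanSpace ℝ (Fin M) | ∀ i m, 0 ≤ μ i m} ∩
    Metric.closedBall 0 (max C ‖lams‖)
  have hlamT : MapsTo lam (Ici 0) T := fun τ hτ => ⟨hlammem τ hτ, mem_closedBall_zero_iff.2 <|
    (pi_norm_le_iff_of_nonneg ((norm_nonneg _).trans (le_max_right _ _))).2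
      fun i => (hC τ hτ i).trans (le_max_left _ _)⟩
  have hls : lams ∈ T := ⟨hlams, mem_closedBall_zero_iff.2 (le_max_right _ _)⟩
  have hT : Convex ℝ T := convex_setOf_nonneg_apply.inter (convex_closedBall _ _)
  have hsaddle' : IsSaddlePointOn (univ.pi Ω) T (penalizedLagrangian f g K (graphPenalty G))
      xs lams := fun y hy l hl =>
    (hsaddle xs hxs l hl.1).1.trans (hsaddle y (fun i => hy i trivial) lams hlams).2
  obtain ⟨θ, hθ, hbound⟩ := hsaddle'.exists_abs_intervalAverage_sub_le_div
    (convex_pi fun i _ => hΩconv i) (isCompact_univ_pi hΩcomp) hT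
    ((isCompact_closedBall _ _).inter_left isClosed_setOf_nonneg_apply)
    ((continuousOn_penalizedLagrangian (fun i => (hflip i).continuousOn.mono (hΩU i))
      (fun i => (hglip i).continuousOn.mono (hΩU i)) (continuous_graphPenalty G)).mono
      (prod_mono_right (subset_univ T)))
    (fun l hl => convexOn_penalizedLagrangian (fun i => (hf i).convexOn.subset (hΩU i) (hΩconv i))
      (fun i k => (hg i k).subset (hΩU i) (hΩconv i)) hl.1)
    (fun y _ => (concaveOn_penalizedLagrangian (convexOn_graphPenalty G) hK.le y).subset
      (subset_univ T) hT)
    (fun i _ => hxs i) hls hxcont hlamcont (fun τ hτ i _ => hxmem τ hτ i) hlamT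
    (V := fun a y => (1 / 2) * ∑ i, ‖a i - y i‖ ^ 2)
    (W := fun a l => (1 / 2) * ∑ i, ‖a i - l i‖ ^ 2)
    (fun _ _ => by positivity) (fun _ _ => by positivity) (by fun_prop) (by fun_prop)
    (fun y hy => hineqx y fun i => hy i trivial) (fun l hl => hineqlam l hl.1)
  refine ⟨θ, hθ, fun t ht => ?_⟩
  rw [eq_intervalAverage_of_forall_apply ht.le (hxcont.mono Icc_subset_Ici_self) (hxhat t ht),
    eq_intervalAverage_of_forall_apply ht.le (hlamcont.mono Icc_subset_Ici_self) (hlamhat t ht)]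
  exact hbound t ht

/-- (Theorem 4, `O(1/t)` convergence rate of the averaged trajectories, with the integral
saddle inequalities as hypotheses.) Let `(x*, λ̃*)` be a saddle point of `L̃` on
`Ω × (ℝ^M_+)^N`, let `x, λ` be continuous trajectories in `Ω` and `(ℝ^M_+)^N` with `λ`
bounded, satisfying for every `x̲ ∈ Ω`, `λ̲ ∈ (ℝ^M_+)^N` and `t > 0` the integral
inequalities
`(1/2)‖x(t) − x̲‖² − (1/2)‖x(0) − x̲‖² ≤ ∫₀ᵗ [L̃(x̲, λ(τ)) − L̃(x(τ), λ(τ))] dτ`,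
`(1/2)‖λ(t) − λ̲‖² − (1/2)‖λ(0) − λ̲‖² ≤ ∫₀ᵗ [L̃(x(τ), λ(τ)) − L̃(x(τ), λ̲)] dτ`.
Then, with `x̂(t), λ̂(t)` the time averages, there is `θ₀ > 0` with
`|L̃(x̂(t), λ̂(t)) − L̃(x*, λ̃*)| ≤ θ₀/t` for all `t > 0`. -/
theorem stmt_13 (N M : ℕ) (hN : 0 < N) (n : Fin N → ℕ)
    (G : SimpleGraph (Fin N)) [DecidableRel G.Adj] (hG : G.Connected)
    (Ω U : ∀ i, Set (EuclideanSpace ℝ (Fin (n i))))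
    (f : ∀ i, EuclideanSpace ℝ (Fin (n i)) → ℝ)
    (g : ∀ i, EuclideanSpace ℝ (Fin (n i)) → EuclideanSpace ℝ (Fin M))
    (hΩcomp : ∀ i, IsCompact (Ω i)) (hΩconv : ∀ i, Convex ℝ (Ω i))
    (hΩne : ∀ i, (Ω i).Nonempty)
    (hUopen : ∀ i, IsOpen (U i)) (hΩU : ∀ i, Ω i ⊆ U i)
    (hf : ∀ i, StrictConvexOn ℝ (U i) (f i)) (hflip : ∀ i, LocallyLipschitzOn (U i) (f i))
    (hg : ∀ i k, ConvexOn ℝ (U i) fun z => g i z k)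
    (hglip : ∀ i, LocallyLipschitzOn (U i) (g i))
    (K : ℝ) (hK : 0 < K)
    (φ : (Fin N → EuclideanSpace ℝ (Fin M)) → ℝ)
    (hφ : ∀ lam, φ lam = (1 / 2) * ∑ i, ∑ j ∈ G.neighborFinset i, ∑ m, |lam i m - lam j m|)
    (Lt : (∀ i, EuclideanSpace ℝ (Fin (n i))) → (Fin N → EuclideanSpace ℝ (Fin M)) → ℝ)
    (hLt : ∀ x lam, Lt x lam = (∑ i, (f i (x i) + ⟪lam i, g i (x i)⟫)) - K * φ lam)
    -- the saddle point
    (xs : ∀ i, EuclideanSpace ℝ (Fin (n i))) (lams : Fin N → EuclideanSpace ℝ (Fin M))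
    (hxs : ∀ i, xs i ∈ Ω i) (hlams : ∀ i m, 0 ≤ lams i m)
    (hsaddle : ∀ x : ∀ i, EuclideanSpace ℝ (Fin (n i)), (∀ i, x i ∈ Ω i) →
      ∀ lam : Fin N → EuclideanSpace ℝ (Fin M), (∀ i m, 0 ≤ lam i m) →
        Lt xs lam ≤ Lt xs lams ∧ Lt xs lams ≤ Lt x lams)
    -- the trajectories
    (x : ℝ → ∀ i, EuclideanSpace ℝ (Fin (n i)))
    (lam : ℝ → Fin N → EuclideanSpace ℝ (Fin M))
    (hxcont : ContinuousOn x (Set.Ici (0 : ℝ)))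
    (hlamcont : ContinuousOn lam (Set.Ici (0 : ℝ)))
    (hxmem : ∀ t ≥ (0 : ℝ), ∀ i, x t i ∈ Ω i)
    (hlammem : ∀ t ≥ (0 : ℝ), ∀ i m, 0 ≤ lam t i m)
    (hlambdd : ∃ C : ℝ, ∀ t ≥ (0 : ℝ), ∀ i, ‖lam t i‖ ≤ C)
    -- the integral saddle inequalities
    (hineqx : ∀ xu : ∀ i, EuclideanSpace ℝ (Fin (n i)), (∀ i, xu i ∈ Ω i) →
      ∀ t > (0 : ℝ),
      (1 / 2) * (∑ i, ‖x t i - xu i‖ ^ 2) - (1 / 2) * (∑ i, ‖x 0 i - xu i‖ ^ 2) ≤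
        ∫ τ in (0 : ℝ)..t, (Lt xu (lam τ) - Lt (x τ) (lam τ)))
    (hineqlam : ∀ lamu : Fin N → EuclideanSpace ℝ (Fin M), (∀ i m, 0 ≤ lamu i m) →
      ∀ t > (0 : ℝ),
      (1 / 2) * (∑ i, ‖lam t i - lamu i‖ ^ 2) - (1 / 2) * (∑ i, ‖lam 0 i - lamu i‖ ^ 2) ≤
        ∫ τ in (0 : ℝ)..t, (Lt (x τ) (lam τ) - Lt (x τ) lamu))
    -- the time averages
    (xhat : ℝ → ∀ i, EuclideanSpace ℝ (Fin (n i)))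
    (lamhat : ℝ → Fin N → EuclideanSpace ℝ (Fin M))
    (hxhat : ∀ t > (0 : ℝ), ∀ i, xhat t i = (1 / t) • ∫ τ in (0 : ℝ)..t, x τ i)
    (hlamhat : ∀ t > (0 : ℝ), ∀ i, lamhat t i = (1 / t) • ∫ τ in (0 : ℝ)..t, lam τ i) :
    ∃ θ₀ > (0 : ℝ), ∀ t > (0 : ℝ),
      |Lt (xhat t) (lamhat t) - Lt xs lams| ≤ θ₀ / t :=
  stmt_13_general N M n G Ω U f g hΩcomp hΩconv hΩU hf hflip hg hglip K hK φ hφ Lt hLt xs lams hxs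
    hlams hsaddle x lam hxcont hlamcont hxmem hlammem hlambdd hineqx hineqlam xhat lamhat hxhat
    hlamhat
end
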